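/- Let x ∈ C and v ∈ R^N with Qx and Qv non-collinear, and suppose Υ(v;x) > 0, where Υ(a;b) = (c^T b)(a^T Q a) - (c^T a)(b^T Q a). Then with τ = Υ(x;v)/Υ(v;x), the point z_τ = x + τ v satisfies c^T z_τ > 0 and R(z_τ) = min over z ∈ span{x,v} of R(z); in particular t ↦ R(x + t v) attains its minimum at t = τ. -/

import Mathlib

/-!
Write `B(u, w) = uᵀ Q w` and `g = B(x,x) B(v,v) - B(x,v)²`, which is positive by the strict
Cauchy–Schwarz inequality since `Qx, Qv` are independent. The vector
`w = Υ(v;x) x + Υ(x;v) v` represents `c` on `span {x, v}`: `B(w, z) = g cᵀz` there. Hence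
`g cᵀw = B(w, w) > 0`, and Cauchy–Schwarz `B(w, z)² ≤ B(w, w) B(z, z)` gives
`(cᵀz)² / B(z, z) ≤ cᵀw / g = (cᵀw)² / B(w, w)`, so `R` is minimal on the span at `w`,
hence at the positive multiple `z_τ = Υ(v;x)⁻¹ w`, where `R` takes the same value.
-/

open Matrix

noncomputable def Rmap {N : ℕ} (Q : Matrix (Fin N) (Fin N) ℝ) (c α : Fin N → ℝ)
    (x : Fin N → ℝ) : ℝ :=
  if 0 < c ⬝ᵥ x then c ⬝ᵥ α - (c ⬝ᵥ x) ^ 2 / (x ⬝ᵥ Q.mulVec x) else c ⬝ᵥ α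

noncomputable def Ups {N : ℕ} (Q : Matrix (Fin N) (Fin N) ℝ) (c : Fin N → ℝ)
    (a b : Fin N → ℝ) : ℝ :=
  (c ⬝ᵥ b) * (a ⬝ᵥ Q.mulVec a) - (c ⬝ᵥ a) * (b ⬝ᵥ Q.mulVec a)

namespace Matrix

variable {n : Type*} [Fintype n] {Q : Matrix n n ℝ}

lemma IsHermitian.dotProduct_mulVec_comm (hQ : Q.IsHermitian) (u w : n → ℝ) :
    u ⬝ᵥ Q *ᵥ w = w ⬝ᵥ Q *ᵥ u := by
  rw [dotProduct_mulVec, ← mulVec_transpose, ← conjTranspose_eq_transpose_of_trivial, hQ.eq,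
    dotProduct_comm]

lemma IsHermitian.dotProduct_mulVec_add_smul_self (hQ : Q.IsHermitian) (u w : n → ℝ) (r : ℝ) :
    (u + r • w) ⬝ᵥ Q *ᵥ (u + r • w) =
      u ⬝ᵥ Q *ᵥ u + 2 * r * (u ⬝ᵥ Q *ᵥ w) + r ^ 2 * (w ⬝ᵥ Q *ᵥ w) := by
  simp only [mulVec_add, mulVec_smul, dotProduct_add, add_dotProduct, smul_dotProduct,
    dotProduct_smul, smul_eq_mul, hQ.dotProduct_mulVec_comm w u]
  ring

namespace PosSemidef

lemma dotProduct_mulVec_self_nonneg (hQ : Q.PosSemidef) (u : n → ℝ) : 0 ≤ u ⬝ᵥ Q *ᵥ u := by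
  simpa using hQ.dotProduct_mulVec_nonneg u

lemma dotProduct_mulVec_self_pos (hQ : Q.PosSemidef) {u : n → ℝ} (hu : Q *ᵥ u ≠ 0) :
    0 < u ⬝ᵥ Q *ᵥ u :=
  (hQ.dotProduct_mulVec_self_nonneg u).lt_of_ne'
    fun h => hu ((hQ.dotProduct_mulVec_zero_iff u).1 (by simpa using h))

lemma sq_dotProduct_mulVec_le (hQ : Q.PosSemidef) (u w : n → ℝ) :
    (u ⬝ᵥ Q *ᵥ w) ^ 2 ≤ (u ⬝ᵥ Q *ᵥ u) * (w ⬝ᵥ Q *ᵥ w) := by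
  have h := discrim_le_zero (a := w ⬝ᵥ Q *ᵥ w) (b := 2 * (u ⬝ᵥ Q *ᵥ w)) (c := u ⬝ᵥ Q *ᵥ u)
    fun r => by
      have := hQ.dotProduct_mulVec_self_nonneg (u + r • w)
      rw [hQ.isHermitian.dotProduct_mulVec_add_smul_self] at this
      linarith
  rw [discrim] at h
  linarith

lemma sq_dotProduct_mulVec_lt (hQ : Q.PosSemidef) {u w : n → ℝ}
    (h : LinearIndependent ℝ ![Q *ᵥ u, Q *ᵥ w]) :
    (u ⬝ᵥ Q *ᵥ w) ^ 2 < (u ⬝ᵥ Q *ᵥ u) * (w ⬝ᵥ Q *ᵥ w) := by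
  set a := u ⬝ᵥ Q *ᵥ u
  set b := u ⬝ᵥ Q *ᵥ w
  have ha : 0 < a := hQ.dotProduct_mulVec_self_pos (h.ne_zero 0)
  have hy : 0 < (a • w + (-b) • u) ⬝ᵥ Q *ᵥ (a • w + (-b) • u) := by
    refine hQ.dotProduct_mulVec_self_pos fun h0 => ha.ne' ?_
    rw [mulVec_add, mulVec_smul, mulVec_smul, add_comm] at h0
    exact (LinearIndependent.pair_iff.1 h _ _ h0).2
  rw [hQ.isHermitian.dotProduct_mulVec_add_smul_self] at hy
  simp only [mulVec_smul, dotProduct_smul, smul_dotProduct, smul_eq_mul,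
    hQ.isHermitian.dotProduct_mulVec_comm w u] at hy
  nlinarith

end PosSemidef

end Matrix

section Rayleigh

variable {N : ℕ} {Q : Matrix (Fin N) (Fin N) ℝ} {c α : Fin N → ℝ}

lemma Rmap_smul (z : Fin N → ℝ) {r : ℝ} (hr : 0 < r) : Rmap Q c α (r • z) = Rmap Q c α z := by
  simp only [Rmap, dotProduct_smul, mulVec_smul, smul_dotProduct, smul_eq_mul,
    mul_pos_iff_of_pos_left hr]
  rw [mul_pow, ← mul_assoc, ← sq, mul_div_mul_left _ _ (pow_ne_zero 2 hr.ne')]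

lemma isLeast_Rmap_image (hQ : Q.PosSemidef) {W : Submodule ℝ (Fin N → ℝ)} {w : Fin N → ℝ}
    (hwW : w ∈ W) {g : ℝ} (hg : 0 < g) (hrep : ∀ z ∈ W, w ⬝ᵥ Q *ᵥ z = g * (c ⬝ᵥ z))
    (hcw : 0 < c ⬝ᵥ w) :
    IsLeast (Rmap Q c α '' W) (Rmap Q c α w) := by
  have hval : Rmap Q c α w = c ⬝ᵥ α - c ⬝ᵥ w / g := by
    rw [Rmap, if_pos hcw, hrep w hwW]
    field_simp
  refine ⟨⟨w, hwW, rfl⟩, ?_⟩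
  rintro _ ⟨z, hz, rfl⟩
  have hcwg : 0 ≤ c ⬝ᵥ w / g := (div_pos hcw hg).le
  rw [hval, Rmap]
  split_ifs with hcz
  · suffices (c ⬝ᵥ z) ^ 2 / (z ⬝ᵥ Q *ᵥ z) ≤ c ⬝ᵥ w / g by linarith
    rcases (hQ.dotProduct_mulVec_self_nonneg z).eq_or_lt with hz0 | hzpos
    · -- a `Q`-null `z` makes the quotient the junk value `x / 0 = 0`
      rw [← hz0, div_zero]
      exact hcwg
    have hCS := hQ.sq_dotProduct_mulVec_le w z
    rw [hrep z hz, hrep w hwW] at hCS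
    rw [div_le_div_iff₀ hzpos hg]
    nlinarith
  · linarith

lemma dotProduct_mulVec_Ups_smul_add (hQ : Q.IsHermitian) (x v : Fin N → ℝ) (s t : ℝ) :
    (Ups Q c v x • x + Ups Q c x v • v) ⬝ᵥ Q *ᵥ (s • x + t • v) =
      ((x ⬝ᵥ Q *ᵥ x) * (v ⬝ᵥ Q *ᵥ v) - (x ⬝ᵥ Q *ᵥ v) ^ 2) * (c ⬝ᵥ (s • x + t • v)) := by
  simp only [Ups, mulVec_add, mulVec_smul, dotProduct_add, add_dotProduct, smul_dotProduct,
    dotProduct_smul, smul_eq_mul, hQ.dotProduct_mulVec_comm v x]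
  ring

end Rayleigh

theorem stmt10_general {N : ℕ} (Q : Matrix (Fin N) (Fin N) ℝ) (hQ : Q.PosSemidef)
    (α : Fin N → ℝ) (c : Fin N → ℝ)
    (x v : Fin N → ℝ)
    (hnc : LinearIndependent ℝ ![Q.mulVec x, Q.mulVec v])
    (hU : 0 < Ups Q c v x) :
    0 < c ⬝ᵥ (x + (Ups Q c x v / Ups Q c v x) • v) ∧
    IsLeast {r : ℝ | ∃ z ∈ (Submodule.span ℝ ({x, v} : Set (Fin N → ℝ)) :
        Set (Fin N → ℝ)), Rmap Q c α z = r}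
      (Rmap Q c α (x + (Ups Q c x v / Ups Q c v x) • v)) ∧
    ∀ t : ℝ, Rmap Q c α (x + (Ups Q c x v / Ups Q c v x) • v)
      ≤ Rmap Q c α (x + t • v) := by
  set w := Ups Q c v x • x + Ups Q c x v • v
  have hwW : w ∈ Submodule.span ℝ {x, v} := Submodule.mem_span_pair.2 ⟨_, _, rfl⟩
  have hg := sub_pos.2 (hQ.sq_dotProduct_mulVec_lt hnc)
  have hrep : ∀ z ∈ Submodule.span ℝ {x, v}, w ⬝ᵥ Q *ᵥ z =
      ((x ⬝ᵥ Q *ᵥ x) * (v ⬝ᵥ Q *ᵥ v) - (x ⬝ᵥ Q *ᵥ v) ^ 2) * (c ⬝ᵥ z) := by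
    intro z hz
    obtain ⟨s, t, rfl⟩ := Submodule.mem_span_pair.1 hz
    exact dotProduct_mulVec_Ups_smul_add hQ.isHermitian x v s t
  have hcw : 0 < c ⬝ᵥ w := by
    have hQw : Q *ᵥ w ≠ 0 := fun h0 => hU.ne' (LinearIndependent.pair_iff.1 hnc _ _ <| by
      simpa only [w, mulVec_add, mulVec_smul] using h0).1
    have hww := hQ.dotProduct_mulVec_self_pos hQw
    rw [hrep w hwW] at hww
    exact pos_of_mul_pos_right hww hg.le
  have hzτ : x + (Ups Q c x v / Ups Q c v x) • v = (Ups Q c v x)⁻¹ • w := by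
    simp only [w, smul_add, smul_smul, inv_mul_cancel₀ hU.ne', one_smul, div_eq_inv_mul]
  have hmin := isLeast_Rmap_image (α := α) hQ hwW hg hrep hcw
  rw [hzτ, Rmap_smul w (inv_pos.2 hU)]
  refine ⟨by rw [dotProduct_smul, smul_eq_mul]; positivity, hmin, fun t => hmin.2 ?_⟩
  exact ⟨_, Submodule.mem_span_pair.2 ⟨1, t, by rw [one_smul]⟩, rfl⟩

theorem stmt10 {N : ℕ} (Q : Matrix (Fin N) (Fin N) ℝ) (hQ : Q.PosSemidef)
    (α : Fin N → ℝ) (c : Fin N → ℝ) (hc : c = Q.mulVec α) (hc0 : c ≠ 0)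
    (x v : Fin N → ℝ) (hx : 0 < c ⬝ᵥ x)
    (hnc : LinearIndependent ℝ ![Q.mulVec x, Q.mulVec v])
    (hU : 0 < Ups Q c v x) :
    0 < c ⬝ᵥ (x + (Ups Q c x v / Ups Q c v x) • v) ∧
    IsLeast {r : ℝ | ∃ z ∈ (Submodule.span ℝ ({x, v} : Set (Fin N → ℝ)) :
        Set (Fin N → ℝ)), Rmap Q c α z = r}
      (Rmap Q c α (x + (Ups Q c x v / Ups Q c v x) • v)) ∧
    ∀ t : ℝ, Rmap Q c α (x + (Ups Q c x v / Ups Q c v x) • v)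
      ≤ Rmap Q c α (x + t • v) :=
  stmt10_general Q hQ α c x v hnc hU
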